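/- arXiv:1401.3708 — 2 statements merged into one kernel-verified Lean document; each statement's English description precedes it below -/
import Mathlib

section
/- Let x ∈ ℝ² with rank(G_x) = 2. Then F_x is a rational line, and d_{F_x} equals the denominator of the smallest positive nonzero rational in G_x; equivalently, G_x ∩ ℚ = ℤ·(1/d_{F_x}). -/
/-- `y` is in the `GL(n,ℤ) ⋉ ℤⁿ`-orbit of `x`, i.e. `y = U x + t` for an integer
matrix `U` with `det U = ±1` and an integer vector `t`. -/
def SameOrbit (n : ℕ) (x y : Fin n → ℝ) : Prop :=
  ∃ (U : Matrix (Fin n) (Fin n) ℤ) (t : Fin n → ℤ),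
    (U.det = 1 ∨ U.det = -1) ∧
    ∀ i, y i = (∑ j, (U i j : ℝ) * x j) + (t i : ℝ)

/-- The subgroup `G_x = ℤ + ℤx₁ + ⋯ + ℤxₙ` of the additive reals. -/
def Gx {n : ℕ} (x : Fin n → ℝ) : AddSubgroup ℝ :=
  AddSubgroup.closure (insert (1 : ℝ) (Set.range x))

/-- A point of `ℝⁿ` is rational if all its coordinates are rational. -/
def IsRationalPoint {n : ℕ} (y : Fin n → ℝ) : Prop :=
  ∀ i, ∃ q : ℚ, y i = (q : ℝ)

/-- The denominator of a rational point: the least positive integer `d`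
with `d • y ∈ ℤⁿ`. -/
noncomputable def den {n : ℕ} (y : Fin n → ℝ) : ℕ :=
  sInf {d : ℕ | 0 < d ∧ ∀ i, ∃ m : ℤ, (d : ℝ) * y i = (m : ℝ)}

/-- The homogeneous correspondent `ỹ = den(y)·(y,1)`, viewed as a real vector. -/
noncomputable def tildeR {n : ℕ} (y : Fin n → ℝ) : Fin (n + 1) → ℝ :=
  fun i => (den y : ℝ) * (Fin.snoc y (1 : ℝ) : Fin (n + 1) → ℝ) i

/-- A rational `m`-simplex `conv(v₀,…,v_m) ⊆ ℝⁿ` is regular if the homogeneous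
correspondents `ṽ₀,…,ṽ_m ∈ ℤ^{n+1}` can be extended to a ℤ-basis of `ℤ^{n+1}`. -/
def IsRegularSimplex {n m : ℕ} (v : Fin (m + 1) → (Fin n → ℝ)) : Prop :=
  AffineIndependent ℝ v ∧ (∀ k, IsRationalPoint (v k)) ∧
  ∃ (b : Module.Basis (Fin (n + 1)) ℤ (Fin (n + 1) → ℤ)) (f : Fin (m + 1) ↪ Fin (n + 1)),
    ∀ k i, ((b (f k)) i : ℝ) = tildeR (v k) i

/-- A rational hyperplane in `ℝⁿ`. -/
def IsRatHyperplane {n : ℕ} (H : Set (Fin n → ℝ)) : Prop :=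
  ∃ (h : Fin n → ℚ) (k : ℚ), h ≠ 0 ∧ H = {z | (∑ i, (h i : ℝ) * z i) = (k : ℝ)}

/-- A rational affine space: an intersection of rational hyperplanes. -/
def IsRatAffineSpace {n : ℕ} (F : Set (Fin n → ℝ)) : Prop :=
  ∃ S : Set (Set (Fin n → ℝ)), (∀ H ∈ S, IsRatHyperplane H) ∧ F = ⋂₀ S

/-- `F_x`: the intersection of all rational hyperplanes containing `x`
(`= ℝⁿ` if there is no such hyperplane). -/
def Fx {n : ℕ} (x : Fin n → ℝ) : Set (Fin n → ℝ) :=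
  ⋂₀ {H | IsRatHyperplane H ∧ x ∈ H}

/-- The (affine) dimension of a subset of `ℝⁿ`. -/
noncomputable def affDim {n : ℕ} (F : Set (Fin n → ℝ)) : ℕ :=
  Module.finrank ℝ ↥(vectorSpan ℝ F)

/-- `d_F`: the least denominator of a rational point of `F`. -/
noncomputable def dF {n : ℕ} (F : Set (Fin n → ℝ)) : ℕ :=
  sInf {d : ℕ | ∃ y ∈ F, IsRationalPoint y ∧ den y = d}

/-- `c_F`: the smallest possible denominator of a vertex of a regular `n`-simplex
`conv(v₀,…,v_n) ⊆ ℝⁿ` with `v₀,…,v_e ∈ F`. -/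
noncomputable def cF {n : ℕ} (e : ℕ) (F : Set (Fin n → ℝ)) : ℕ :=
  sInf {c : ℕ | ∃ (v : Fin (n + 1) → (Fin n → ℝ)) (i : Fin (n + 1)),
    IsRegularSimplex v ∧ (∀ k : Fin (n + 1), (k : ℕ) ≤ e → v k ∈ F) ∧ den (v i) = c}

/-- `c_x = c_{F_x}`. -/
noncomputable def cx {n : ℕ} (x : Fin n → ℝ) : ℕ := cF (affDim (Fx x)) (Fx x)

/-- Membership in the Farey sequence `𝔉_d`. -/
def InFarey (d : ℕ) (x : ℚ) : Prop := 0 ≤ x ∧ x ≤ 1 ∧ x.den ≤ d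

/-- `x` and `y` are neighbors (contiguous elements) of the Farey sequence `𝔉_d`. -/
def FareyNeighbor (d : ℕ) (x y : ℚ) : Prop :=
  InFarey d x ∧ InFarey d y ∧ x ≠ y ∧
  ∀ t : ℚ, InFarey d t → ¬ (min x y < t ∧ t < max x y)

/-- `y` is the companion of `x`: `comp 0 = 1`, `comp 1 = 0`, `comp (1/2) = 1`, and
for denominator `d ≥ 3`, `comp x` is the neighbor of `x` in `𝔉_d` with smaller
denominator than the other neighbor. -/
def IsCompanion (x y : ℚ) : Prop :=
  (x = 0 ∧ y = 1) ∨ (x = 1 ∧ y = 0) ∨ (x = 1/2 ∧ y = 1) ∨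
  (3 ≤ x.den ∧ FareyNeighbor x.den x y ∧
    ∀ z : ℚ, FareyNeighbor x.den x z → z ≠ y → y.den < z.den)


/-!
Since `rank G_x = 2 < 3`, the numbers `1, x₀, x₁` satisfy a nontrivial integer relation, which
normalises to `B x₀ + C x₁ = k` with `B, C` coprime and `k ∈ ℚ`; and `x` is not rational, for
otherwise `G_x` would lie in the cyclic group `ℤ / den x`. Any rational relation
`p x₀ + q x₁ = s` is then a multiple of this one, since two independent ones would determine `x`
rationally by Cramer's rule. Hence `F_x` is the line `B z₀ + C z₁ = k`, and `G_x ∩ ℚ = ℤ + ℤ k`,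
which is `ℤ / den k` by Bézout applied to `num k, den k`. Finally `d_{F_x} = den k`: with
`u B + v C = 1` the line contains the point `k (u, v)`, of denominator at most `den k`, while a
rational point `z` of denominator `d` on the line gives `d k = B (d z₀) + C (d z₁) ∈ ℤ`, so
`den k ∣ d`.
-/

open Module Submodule

section Gx

variable {n : ℕ} (x : Fin n → ℝ)

theorem Gx_toIntSubmodule :
    (Gx x).toIntSubmodule = span ℤ (Set.range (Fin.cons 1 x : Fin (n + 1) → ℝ)) := by
  rw [Gx, AddSubgroup.toIntSubmodule_closure, Fin.range_cons]

theorem mem_Gx_iff {r : ℝ} : r ∈ Gx x ↔ ∃ (a : ℤ) (c : Fin n → ℤ), a + ∑ i, c i * x i = r := by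
  change r ∈ (Gx x).toIntSubmodule ↔ _
  rw [Gx_toIntSubmodule, mem_span_range_iff_exists_fun]
  constructor
  · rintro ⟨c, rfl⟩
    exact ⟨c 0, Fin.tail c, by simp [Fin.sum_univ_succ, zsmul_eq_mul, Fin.tail]⟩
  · rintro ⟨a, c, rfl⟩
    exact ⟨Fin.cons a c, by simp [Fin.sum_univ_succ, zsmul_eq_mul]⟩

end Gx

theorem den_le_of_forall_mul_eq_intCast {n : ℕ} {y : Fin n → ℝ} {d : ℕ} (hd : 0 < d)
    (h : ∀ i, ∃ m : ℤ, (d : ℝ) * y i = m) : den y ≤ d :=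
  Nat.sInf_le ⟨hd, h⟩

theorem IsRationalPoint.den_spec {n : ℕ} {y : Fin n → ℝ} (hy : IsRationalPoint y) :
    0 < den y ∧ ∀ i, ∃ m : ℤ, (den y : ℝ) * y i = m := by
  choose q hq using hy
  suffices h : ∏ i, (q i).den ∈ {d : ℕ | 0 < d ∧ ∀ i, ∃ m : ℤ, (d : ℝ) * y i = m} from
    Nat.sInf_mem ⟨_, h⟩
  refine ⟨Finset.prod_pos fun i _ => (q i).pos, fun i => ?_⟩
  obtain ⟨e, he⟩ := Finset.dvd_prod_of_mem (fun j => (q j).den) (Finset.mem_univ i)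
  refine ⟨e * (q i).num, ?_⟩
  have hnum : ((q i).den : ℝ) * q i = (q i).num := by exact_mod_cast Rat.den_mul_eq_num (q i)
  rw [he, hq]
  push_cast
  rw [← hnum]
  ring

theorem Rat.den_dvd_of_natCast_mul_eq_intCast {k : ℚ} {d : ℕ} {m : ℤ} (h : (d : ℚ) * k = m) :
    k.den ∣ d := by
  have hdvd : (k.den : ℤ) ∣ k.num * d := by
    refine ⟨m, ?_⟩
    have : (k.num : ℚ) * d = k.den * m := by rw [← Rat.den_mul_eq_num, ← h]; ring
    exact_mod_cast this
  have hcop : IsCoprime (k.den : ℤ) k.num :=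
    Int.isCoprime_iff_gcd_eq_one.mpr (by rw [Int.gcd_comm]; exact k.reduced)
  exact Int.natCast_dvd_natCast.mp (hcop.dvd_of_dvd_mul_left hdvd)

theorem finrank_Gx_le_one_of_isRationalPoint {n : ℕ} {x : Fin n → ℝ} (hx : IsRationalPoint x) :
    finrank ℤ (Gx x) ≤ 1 := by
  obtain ⟨hpos, hint⟩ := hx.den_spec
  have hle : (Gx x).toIntSubmodule ≤ ℤ ∙ (den x : ℝ)⁻¹ := by
    rw [Gx_toIntSubmodule, span_le, Set.range_subset_iff]
    intro i
    rw [SetLike.mem_coe, mem_span_singleton]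
    refine Fin.cases ⟨den x, ?_⟩ (fun i => ?_) i
    · simp [hpos.ne']
    · obtain ⟨m, hm⟩ := hint i
      exact ⟨m, by rw [Fin.cons_succ, zsmul_eq_mul, ← hm]; field_simp⟩
  calc finrank ℤ (Gx x) = finrank ℤ (Gx x).toIntSubmodule := rfl
    _ ≤ finrank ℤ (ℤ ∙ (den x : ℝ)⁻¹) := Submodule.finrank_mono hle
    _ ≤ 1 := by simpa using finrank_span_le_card ({(den x : ℝ)⁻¹} : Set ℝ)

theorem exists_int_relation_of_finrank_Gx_lt {n : ℕ} {x : Fin n → ℝ}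
    (h : finrank ℤ (Gx x) < n + 1) :
    ∃ (a : ℤ) (c : Fin n → ℤ), c ≠ 0 ∧ a + ∑ i, c i * x i = 0 := by
  have hdep : ¬ LinearIndependent ℤ (Fin.cons 1 x : Fin (n + 1) → ℝ) := fun hli => h.ne <| by
    change finrank ℤ (Gx x).toIntSubmodule = n + 1
    rw [Gx_toIntSubmodule, finrank_span_eq_card hli, Fintype.card_fin]
  obtain ⟨g, hg, i, hi⟩ := Fintype.not_linearIndependent_iff.mp hdep
  simp only [Fin.sum_univ_succ, Fin.cons_zero, Fin.cons_succ, zsmul_eq_mul, mul_one] at hg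
  refine ⟨g 0, Fin.tail g, fun hc => hi ?_, hg⟩
  have hc' : ∀ j : Fin n, g j.succ = 0 := fun j => congrFun hc j
  have hg0 : g 0 = 0 := by simpa [hc'] using hg
  exact Fin.cases hg0 hc' i

theorem exists_isCoprime_relation {x : Fin 2 → ℝ} (hx : finrank ℤ (Gx x) = 2) :
    ∃ (B C : ℤ) (k : ℚ), IsCoprime B C ∧ B * x 0 + C * x 1 = k := by
  obtain ⟨a, c, hc, hrel⟩ := exists_int_relation_of_finrank_Gx_lt (x := x) (by omega)
  have hgcd : 0 < Int.gcd (c 0) (c 1) := Int.gcd_pos_iff.mpr <| by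
    by_contra! h
    exact hc (funext fun i => by fin_cases i <;> simp [h])
  obtain ⟨g, B, C, hg, hBC, hB, hC⟩ := Int.exists_gcd_one' hgcd
  refine ⟨B, C, -a / g, Int.isCoprime_iff_gcd_eq_one.mpr hBC, ?_⟩
  rw [Fin.sum_univ_two, hB, hC] at hrel
  push_cast at hrel ⊢
  field_simp
  linarith

theorem exists_eq_mul_of_mul_eq_mul {K : Type*} [Field K] {B C p q : K} (hBC : B ≠ 0 ∨ C ≠ 0)
    (h : p * C = q * B) : ∃ t, p = t * B ∧ q = t * C := by
  rcases hBC with hB | hC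
  · exact ⟨p / B, by field_simp, by field_simp; linear_combination -h⟩
  · exact ⟨q / C, by field_simp; linear_combination h, by field_simp⟩

theorem exists_eq_mul_of_not_isRationalPoint {x : Fin 2 → ℝ} (hx : ¬ IsRationalPoint x)
    {B C k p q s : ℚ} (hBC : B ≠ 0 ∨ C ≠ 0) (hk : B * x 0 + C * x 1 = k)
    (hs : p * x 0 + q * x 1 = s) : ∃ t : ℚ, p = t * B ∧ q = t * C ∧ s = t * k := by
  by_cases hD : p * C = q * B
  · obtain ⟨t, rfl, rfl⟩ := exists_eq_mul_of_mul_eq_mul hBC hD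
    refine ⟨t, rfl, rfl, ?_⟩
    exact_mod_cast (by push_cast at hs ⊢; rw [← hs, ← hk]; ring : (s : ℝ) = (t * k : ℚ))
  · -- otherwise Cramer's rule solves the two relations for a rational `x`
    have hD' : ((p * C - q * B : ℚ) : ℝ) ≠ 0 := by exact_mod_cast sub_ne_zero.mpr hD
    refine absurd (fun i => ?_) hx
    fin_cases i
    · refine ⟨(C * s - q * k) / (p * C - q * B), ?_⟩
      rw [Rat.cast_div, eq_div_iff hD']
      push_cast
      linear_combination (C : ℝ) * hs - (q : ℝ) * hk
    · refine ⟨(p * k - B * s) / (p * C - q * B), ?_⟩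
      rw [Rat.cast_div, eq_div_iff hD']
      push_cast
      linear_combination (p : ℝ) * hk - (B : ℝ) * hs

def ratLine (B C : ℤ) (k : ℚ) : Set (Fin 2 → ℝ) := {z | B * z 0 + C * z 1 = k}

theorem isRatHyperplane_ratLine {B C : ℤ} (hBC : B ≠ 0 ∨ C ≠ 0) (k : ℚ) :
    IsRatHyperplane (ratLine B C k) := by
  refine ⟨![B, C], k, fun h => ?_, by ext z; simp [ratLine, Fin.sum_univ_two]⟩
  have h0 := congrFun h 0
  have h1 := congrFun h 1
  simp_all

theorem Fx_eq_ratLine {x : Fin 2 → ℝ} (hx : ¬ IsRationalPoint x) {B C : ℤ} {k : ℚ}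
    (hBC : B ≠ 0 ∨ C ≠ 0) (hk : B * x 0 + C * x 1 = k) : Fx x = ratLine B C k := by
  refine subset_antisymm (Set.sInter_subset_of_mem ⟨isRatHyperplane_ratLine hBC k, hk⟩) ?_
  rintro z hz H ⟨⟨h, k', -, rfl⟩, hxH⟩
  simp only [Set.mem_ofPred_eq, Fin.sum_univ_two] at hxH ⊢
  obtain ⟨t, h0, h1, rfl⟩ := exists_eq_mul_of_not_isRationalPoint hx
    (B := B) (C := C) (by exact_mod_cast hBC) (by exact_mod_cast hk) hxH
  have hz : (B : ℝ) * z 0 + C * z 1 = k := hz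
  rw [h0, h1]
  push_cast
  linear_combination (t : ℝ) * hz

theorem dF_ratLine {B C : ℤ} (hBC : IsCoprime B C) (k : ℚ) : dF (ratLine B C k) = k.den := by
  obtain ⟨u, v, huv⟩ := hBC
  set y : Fin 2 → ℝ := ![(k * u : ℚ), (k * v : ℚ)]
  have hy : y ∈ ratLine B C k := by
    have : (B : ℚ) * (k * u) + C * (k * v) = k := by
      linear_combination k * (by exact_mod_cast huv : (u : ℚ) * B + v * C = 1)
    change (B : ℝ) * (k * u : ℚ) + C * (k * v : ℚ) = k
    exact_mod_cast this
  have hyrat : IsRationalPoint y := fun i => by fin_cases i <;> exact ⟨_, rfl⟩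
  have hden : den y ≤ k.den := by
    refine den_le_of_forall_mul_eq_intCast k.pos fun i => ?_
    have hnum : (k.den : ℝ) * k = k.num := by exact_mod_cast Rat.den_mul_eq_num k
    fin_cases i
    · exact ⟨k.num * u, by simp [y, ← hnum]; ring⟩
    · exact ⟨k.num * v, by simp [y, ← hnum]; ring⟩
  have hmem : den y ∈ {d : ℕ | ∃ y ∈ ratLine B C k, IsRationalPoint y ∧ den y = d} :=
    ⟨y, hy, hyrat, rfl⟩
  have hlower : ∀ d ∈ {d : ℕ | ∃ y ∈ ratLine B C k, IsRationalPoint y ∧ den y = d}, k.den ≤ d := by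
    rintro _ ⟨z, hz, hzrat, rfl⟩
    obtain ⟨hpos, hint⟩ := hzrat.den_spec
    obtain ⟨m0, hm0⟩ := hint 0
    obtain ⟨m1, hm1⟩ := hint 1
    have hzk : (den z : ℝ) * k = (B * m0 + C * m1 : ℤ) := by
      push_cast
      rw [← hm0, ← hm1, ← hz]
      ring
    exact Nat.le_of_dvd hpos (Rat.den_dvd_of_natCast_mul_eq_intCast (by exact_mod_cast hzk))
  exact le_antisymm ((Nat.sInf_le hmem).trans hden) (le_csInf ⟨_, hmem⟩ hlower)

theorem exists_int_add_int_mul_iff (k : ℚ) (r : ℝ) :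
    (∃ a b : ℤ, r = a + b * k) ↔ ∃ m : ℤ, r = m / k.den := by
  have hden : (k.den : ℝ) ≠ 0 := by exact_mod_cast k.pos.ne'
  rw [Rat.cast_def]
  constructor
  · rintro ⟨a, b, rfl⟩
    exact ⟨a * k.den + b * k.num, by push_cast; field_simp⟩
  · rintro ⟨m, rfl⟩
    obtain ⟨u, v, huv⟩ : IsCoprime k.num k.den := Int.isCoprime_iff_gcd_eq_one.mpr k.reduced
    refine ⟨m * v, m * u, ?_⟩
    field_simp
    push_cast
    linear_combination (m : ℝ) * (by exact_mod_cast huv : (u : ℝ) * k.num + v * k.den = 1).symm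

theorem Gx_inter_range_ratCast {x : Fin 2 → ℝ} (hx : ¬ IsRationalPoint x) {B C : ℤ} {k : ℚ}
    (hBC : IsCoprime B C) (hk : B * x 0 + C * x 1 = k) :
    {r : ℝ | r ∈ Gx x ∧ ∃ q : ℚ, r = q} = {r : ℝ | ∃ a b : ℤ, r = a + b * k} := by
  ext r
  simp only [Set.mem_ofPred_eq, mem_Gx_iff, Fin.sum_univ_two]
  constructor
  · rintro ⟨⟨a, c, rfl⟩, q, hq⟩
    have hs : ((c 0 : ℚ) : ℝ) * x 0 + ((c 1 : ℚ) : ℝ) * x 1 = (q - a : ℚ) := by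
      push_cast
      linarith
    obtain ⟨t, h0, h1, hqa⟩ := exists_eq_mul_of_not_isRationalPoint hx
      (B := B) (C := C) (by exact_mod_cast hBC.ne_zero_or_ne_zero) (by exact_mod_cast hk) hs
    obtain ⟨u, v, huv⟩ := hBC
    -- `t` is an integer: `t = t (u B + v C) = u c₀ + v c₁`
    have ht : t = (u * c 0 + v * c 1 : ℤ) := by
      push_cast
      rw [h0, h1]
      linear_combination (-t) * (by exact_mod_cast huv : (u : ℚ) * B + v * C = 1)
    refine ⟨a, u * c 0 + v * c 1, ?_⟩
    rw [hq, show q = a + t * k by linarith, ht]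
    push_cast
    ring
  · rintro ⟨a, b, rfl⟩
    refine ⟨⟨a, ![b * B, b * C], ?_⟩, a + b * k, by push_cast; ring⟩
    simp only [Matrix.cons_val_zero, Matrix.cons_val_one]
    push_cast
    rw [← hk]
    ring

/-- If `x ∈ ℝ²` has `rank G_x = 2`, then `F_x` is a rational line,
and `d_{F_x}` is the denominator of the smallest positive nonzero rational in `G_x`;
equivalently, `G_x ∩ ℚ = ℤ·(1/d_{F_x})`. -/
theorem Fx_line_and_rationals_of_Gx (x : Fin 2 → ℝ)
    (hx : Module.finrank ℤ ↥(Gx x) = 2) :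
    IsRatHyperplane (Fx x) ∧
    {r : ℝ | r ∈ Gx x ∧ ∃ q : ℚ, r = (q : ℝ)}
      = {r : ℝ | ∃ m : ℤ, r = (m : ℝ) / (dF (Fx x) : ℝ)} := by
  obtain ⟨B, C, k, hBC, hk⟩ := exists_isCoprime_relation hx
  have hirr : ¬ IsRationalPoint x := fun h => by
    have := finrank_Gx_le_one_of_isRationalPoint h
    omega
  have hFx := Fx_eq_ratLine hirr hBC.ne_zero_or_ne_zero hk
  refine ⟨hFx ▸ isRatHyperplane_ratLine hBC.ne_zero_or_ne_zero k, ?_⟩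
  rw [Gx_inter_range_ratCast hirr hBC hk, hFx, dF_ratLine hBC]
  ext r
  exact exists_int_add_int_mul_iff k r
end

section
/- Consider the action of 𝒢₁ = GL(1,ℤ) ⋉ ℤ on ℝ, i.e., the maps x ↦ ±x + t with t ∈ ℤ. (i) If x ∈ ℝ is irrational (rank(G_x) = 2), then for all y ∈ ℝ, orb(x) = orb(y) iff G_x = G_y. (ii) If x is rational with G_x = ℤ·(1/d) and d ≤ 4, then for all y ∈ ℝ, orb(x) = orb(y) iff G_x = G_y. (iii) If x is rational with G_x = ℤ·(1/d) and d > 4, then the set of 𝒢₁-orbits of points y ∈ ℝ with G_y = G_x has exactly max(1, φ(d)/2) elements, where φ is Euler's totient function; equivalently, for coprime p, p' with 0 < p, p' < d, orb(p/d) = orb(p'/d) iff p' ≡ ±p (mod d). -/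
/-- `y` is in the `𝒢₁ = GL(1,ℤ) ⋉ ℤ`-orbit of `x`, i.e. `y = ±x + t`, `t ∈ ℤ`. -/
def SameOrbit1 (x y : ℝ) : Prop :=
  ∃ u t : ℤ, (u = 1 ∨ u = -1) ∧ y = (u : ℝ) * x + (t : ℝ)

/-- The subgroup `G_x = ℤ + ℤx` of the additive reals. -/
def Gx1 (x : ℝ) : AddSubgroup ℝ :=
  AddSubgroup.closure {(1 : ℝ), x}

/-!
The `𝒢₁`-orbit of `x` is `±x + ℤ`, which lies in `G_x`. Conversely, if `G_x = G_y` then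
`y = a + bx` and `x = c + ey`, so `(1 - eb)x ∈ ℤ`; for irrational `x` this forces `b = ±1`,
that is, `y ∈ orb(x)`. The points `y` with `G_y = ℤ·(1/d)` are the `m/d` with `m` a unit
mod `d`, and `m/d`, `m'/d` lie in one orbit iff `m' ≡ ±m (mod d)`. Hence these orbits are
the classes of `(ℤ/dℤ)ˣ` modulo `±1`: a single class for `d ≤ 4`, and `φ(d)/2` classes for
`d > 2`, where `u ≠ -u` for every unit `u`.
-/

lemma card_eq_mul_ncard_range {α β : Type*} [Finite α] {f : α → β} {k : ℕ}
    (hf : ∀ a, {b | f a = f b}.ncard = k) : Nat.card α = k * (Set.range f).ncard := by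
  classical
  have := Fintype.ofFinite α
  have hrange : Set.range f = ↑(Finset.univ.image f) := by simp
  rw [hrange, Set.ncard_coe_finset, Nat.card_eq_fintype_card, ← Finset.card_univ,
    Finset.card_eq_sum_card_image f, Finset.sum_const_nat, mul_comm]
  intro b hb
  obtain ⟨a, -, rfl⟩ := Finset.mem_image.1 hb
  rw [← hf a, ← Set.ncard_coe_finset]
  simp [eq_comm]

lemma ZMod.units_eq_one_or_neg_one_of_le_four {d : ℕ} (hd : d ≤ 4) (u : (ZMod d)ˣ) :
    u = 1 ∨ u = -1 := by
  interval_cases d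
  · exact Int.units_eq_one_or u
  all_goals revert u; decide

lemma ZMod.units_ne_neg_self {d : ℕ} (hd : 2 < d) (u : (ZMod d)ˣ) : u ≠ -u := by
  have : Fact (2 < d) := ⟨hd⟩
  intro h
  apply ZMod.neg_one_ne_one (n := d)
  simpa using congrArg (fun v => ((v * u⁻¹ : (ZMod d)ˣ) : ZMod d)) h.symm

lemma SameOrbit1.refl (x : ℝ) : SameOrbit1 x x := ⟨1, 0, .inl rfl, by simp⟩

lemma SameOrbit1.symm {x y : ℝ} (h : SameOrbit1 x y) : SameOrbit1 y x := by
  obtain ⟨u, t, hu | hu, rfl⟩ := h <;> subst hu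
  · exact ⟨1, -t, .inl rfl, by push_cast; ring⟩
  · exact ⟨-1, t, .inr rfl, by push_cast; ring⟩

lemma SameOrbit1.trans {x y z : ℝ} (h : SameOrbit1 x y) (h' : SameOrbit1 y z) :
    SameOrbit1 x z := by
  obtain ⟨u, t, hu, rfl⟩ := h
  obtain ⟨u', t', hu', rfl⟩ := h'
  refine ⟨u' * u, u' * t + t', ?_, by push_cast; ring⟩
  rcases hu with rfl | rfl <;> rcases hu' with rfl | rfl <;> simp

lemma setOf_sameOrbit1_eq_iff {x y : ℝ} :
    {z | SameOrbit1 x z} = {z | SameOrbit1 y z} ↔ SameOrbit1 x y := by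
  refine ⟨fun h => ?_, fun h => Set.ext fun z => ⟨h.symm.trans, h.trans⟩⟩
  have hx : x ∈ {z | SameOrbit1 y z} := h ▸ SameOrbit1.refl x
  exact SameOrbit1.symm hx

lemma mem_Gx1 {x z : ℝ} : z ∈ Gx1 x ↔ ∃ a b : ℤ, a + b * x = z := by
  simp [Gx1, AddSubgroup.mem_closure_pair, zsmul_eq_mul]

lemma self_mem_Gx1 (x : ℝ) : x ∈ Gx1 x := mem_Gx1.2 ⟨0, 1, by simp⟩

lemma Gx1_le_iff {x y : ℝ} : Gx1 x ≤ Gx1 y ↔ x ∈ Gx1 y := by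
  rw [Gx1, AddSubgroup.closure_le, Set.pair_subset_iff]
  exact and_iff_right (mem_Gx1.2 ⟨1, 0, by simp⟩)

lemma Gx1_eq_iff {x y : ℝ} : Gx1 x = Gx1 y ↔ x ∈ Gx1 y ∧ y ∈ Gx1 x := by
  rw [le_antisymm_iff, Gx1_le_iff, Gx1_le_iff]

lemma SameOrbit1.mem_Gx1 {x y : ℝ} (h : SameOrbit1 x y) : y ∈ Gx1 x := by
  obtain ⟨u, t, -, rfl⟩ := h
  exact _root_.mem_Gx1.2 ⟨t, u, add_comm _ _⟩

lemma SameOrbit1.Gx1_eq {x y : ℝ} (h : SameOrbit1 x y) : Gx1 x = Gx1 y :=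
  Gx1_eq_iff.2 ⟨h.symm.mem_Gx1, h.mem_Gx1⟩

lemma Irrational.sameOrbit1_of_Gx1_eq {x y : ℝ} (hx : Irrational x) (h : Gx1 x = Gx1 y) :
    SameOrbit1 x y := by
  obtain ⟨hxy, hyx⟩ := Gx1_eq_iff.1 h
  obtain ⟨a, b, hy⟩ := mem_Gx1.1 hyx
  obtain ⟨c, e, hx'⟩ := mem_Gx1.1 hxy
  have hint : ((1 - e * b : ℤ) : ℝ) * x = (c + e * a : ℤ) := by
    push_cast
    linear_combination -hx' - e * hy
  have heb : 1 - e * b = 0 := by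
    by_contra hne
    exact (hx.intCast_mul hne).ne_int _ hint
  have hb : b = 1 ∨ b = -1 := Int.eq_one_or_neg_one_of_mul_eq_one (v := e) (by linarith)
  exact ⟨b, a, hb, by rw [← hy]; ring⟩

section Rational

variable {d : ℕ}

lemma mem_Gx1_inv (hd : d ≠ 0) {y : ℝ} : y ∈ Gx1 (d : ℝ)⁻¹ ↔ ∃ m : ℤ, y = m / d := by
  rw [mem_Gx1]
  constructor
  · rintro ⟨a, b, rfl⟩
    exact ⟨a * d + b, by push_cast; field_simp⟩
  · rintro ⟨m, rfl⟩
    exact ⟨0, m, by simp [div_eq_mul_inv]⟩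

lemma inv_mem_Gx1_intCast_div_iff (hd : d ≠ 0) {m : ℤ} :
    (d : ℝ)⁻¹ ∈ Gx1 (m / d) ↔ IsCoprime m d := by
  have hd' : (d : ℝ) ≠ 0 := by exact_mod_cast hd
  rw [mem_Gx1, IsCoprime, exists_comm]
  refine exists_congr fun b => exists_congr fun a => ?_
  rw [← @Int.cast_inj ℝ]
  push_cast
  field_simp
  constructor <;> intro h <;> linarith

lemma Gx1_intCast_div_eq_iff (hd : d ≠ 0) {m : ℤ} :
    Gx1 (m / d) = Gx1 (d : ℝ)⁻¹ ↔ IsCoprime m d := by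
  rw [Gx1_eq_iff, mem_Gx1_inv hd, inv_mem_Gx1_intCast_div_iff hd]
  exact and_iff_right ⟨m, rfl⟩

lemma Gx1_eq_Gx1_inv_iff (hd : d ≠ 0) {y : ℝ} :
    Gx1 y = Gx1 (d : ℝ)⁻¹ ↔ ∃ m : ℤ, IsCoprime m d ∧ y = m / d := by
  refine ⟨fun h => ?_, fun ⟨m, hm, hy⟩ => hy ▸ (Gx1_intCast_div_eq_iff hd).2 hm⟩
  obtain ⟨m, rfl⟩ := (mem_Gx1_inv hd).1 (h ▸ self_mem_Gx1 y)
  exact ⟨m, (Gx1_intCast_div_eq_iff hd).1 h, rfl⟩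

lemma Gx1_ratCast (q : ℚ) : Gx1 q = Gx1 (q.den : ℝ)⁻¹ := by
  rw [Rat.cast_def, Gx1_intCast_div_eq_iff q.den_nz]
  exact Int.isCoprime_iff_gcd_eq_one.2 q.reduced

lemma sameOrbit1_intCast_div_iff (hd : d ≠ 0) {a b : ℤ} :
    SameOrbit1 (a / d) (b / d) ↔ b ≡ a [ZMOD d] ∨ b ≡ -a [ZMOD d] := by
  have hd' : (d : ℝ) ≠ 0 := by exact_mod_cast hd
  have key : ∀ u t : ℤ, (b : ℝ) / d = u * (a / d) + t ↔ b = u * a + d * t := fun u t => by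
    rw [← @Int.cast_inj ℝ]
    push_cast
    field_simp
  simp only [SameOrbit1, key, Int.modEq_comm (a := b), Int.modEq_iff_add_fac]
  constructor
  · rintro ⟨u, t, rfl | rfl, h⟩
    · exact .inl ⟨t, by simpa using h⟩
    · exact .inr ⟨t, by simpa using h⟩
  · rintro (⟨t, h⟩ | ⟨t, h⟩)
    · exact ⟨1, t, .inl rfl, by simpa using h⟩
    · exact ⟨-1, t, .inr rfl, by simpa using h⟩

lemma sameOrbit1_intCast_div_iff_zmod (hd : d ≠ 0) {a b : ℤ} :
    SameOrbit1 (a / d) (b / d) ↔ (b : ZMod d) = a ∨ (b : ZMod d) = -a := by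
  rw [sameOrbit1_intCast_div_iff hd, ← ZMod.intCast_eq_intCast_iff, ← Int.cast_neg,
    ← ZMod.intCast_eq_intCast_iff]

lemma sameOrbit1_of_Gx1_eq_Gx1_inv_of_le_four (hd0 : d ≠ 0) (hd : d ≤ 4) {x y : ℝ}
    (hx : Gx1 x = Gx1 (d : ℝ)⁻¹) (hy : Gx1 y = Gx1 (d : ℝ)⁻¹) : SameOrbit1 x y := by
  obtain ⟨a, ha, rfl⟩ := (Gx1_eq_Gx1_inv_iff hd0).1 hx
  obtain ⟨b, hb, rfl⟩ := (Gx1_eq_Gx1_inv_iff hd0).1 hy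
  rw [sameOrbit1_intCast_div_iff_zmod hd0, ← ZMod.coe_unitOfIsCoprime a ha,
    ← ZMod.coe_unitOfIsCoprime b hb, ← Units.val_neg, Units.val_inj, Units.val_inj]
  rcases ZMod.units_eq_one_or_neg_one_of_le_four hd
    (ZMod.unitOfIsCoprime b hb * (ZMod.unitOfIsCoprime a ha)⁻¹) with h | h
  · exact .inl (mul_inv_eq_one.1 h)
  · rw [mul_inv_eq_iff_eq_mul, neg_one_mul] at h
    exact .inr h

def orbitOfUnit (d : ℕ) (u : (ZMod d)ˣ) : Set ℝ :=
  {z | SameOrbit1 (((u : ZMod d).cast : ℤ) / d) z}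

lemma orbitOfUnit_eq_iff (hd : d ≠ 0) {u v : (ZMod d)ˣ} :
    orbitOfUnit d u = orbitOfUnit d v ↔ v = u ∨ v = -u := by
  have : NeZero d := ⟨hd⟩
  rw [orbitOfUnit, orbitOfUnit, setOf_sameOrbit1_eq_iff, sameOrbit1_intCast_div_iff_zmod hd,
    ZMod.intCast_zmod_cast, ZMod.intCast_zmod_cast, Units.ext_iff, Units.ext_iff, Units.val_neg]

lemma orbits_of_Gx1_inv_eq_range (hd : d ≠ 0) :
    {O : Set ℝ | ∃ y : ℝ, Gx1 y = Gx1 (d : ℝ)⁻¹ ∧ O = {z | SameOrbit1 y z}} =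
      Set.range (orbitOfUnit d) := by
  have : NeZero d := ⟨hd⟩
  ext O
  constructor
  · rintro ⟨y, hy, rfl⟩
    obtain ⟨m, hm, rfl⟩ := (Gx1_eq_Gx1_inv_iff hd).1 hy
    refine ⟨ZMod.unitOfIsCoprime m hm, ?_⟩
    rw [orbitOfUnit, setOf_sameOrbit1_eq_iff, sameOrbit1_intCast_div_iff_zmod hd,
      ZMod.intCast_zmod_cast, ZMod.coe_unitOfIsCoprime]
    exact .inl rfl
  · rintro ⟨u, rfl⟩
    refine ⟨_, (Gx1_intCast_div_eq_iff hd).2 ?_, rfl⟩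
    rw [← isCoprime_comm, ← ZMod.coe_int_isUnit_iff_isCoprime, ZMod.intCast_zmod_cast]
    exact u.isUnit

lemma ncard_range_orbitOfUnit (hd : 2 < d) :
    (Set.range (orbitOfUnit d)).ncard = d.totient / 2 := by
  have hcard := card_eq_mul_ncard_range (f := orbitOfUnit d) (k := 2) fun u => by
    have hfiber : {v | orbitOfUnit d u = orbitOfUnit d v} = {u, -u} :=
      Set.ext fun v => orbitOfUnit_eq_iff (by omega)
    rw [hfiber, Set.ncard_pair (ZMod.units_ne_neg_self hd u)]
  have : NeZero d := ⟨by omega⟩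
  rw [Nat.card_eq_fintype_card, ZMod.card_units_eq_totient] at hcard
  omega

end Rational

/-- For the action of `𝒢₁ = GL(1,ℤ) ⋉ ℤ` on `ℝ`:
(i) for irrational `x`, `orb(x) = orb(y)` iff `G_x = G_y`;
(ii) for rational `x` with `G_x = ℤ·(1/d)` and `d ≤ 4`, `orb(x) = orb(y)` iff
`G_x = G_y`;
(iii) for `d > 4`, the set of orbits of points `y` with `G_y = ℤ·(1/d)` has exactly
`max(1, φ(d)/2)` elements; equivalently, for coprime `0 < p, p' < d`,
`orb(p/d) = orb(p'/d)` iff `p' ≡ ±p (mod d)`. -/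
theorem one_dimensional_orbit_classification :
    (∀ x : ℝ, Irrational x → ∀ y : ℝ,
      ({z | SameOrbit1 x z} = {z | SameOrbit1 y z} ↔ Gx1 x = Gx1 y)) ∧
    (∀ q : ℚ, q.den ≤ 4 → ∀ y : ℝ,
      ({z | SameOrbit1 (q : ℝ) z} = {z | SameOrbit1 y z} ↔ Gx1 (q : ℝ) = Gx1 y)) ∧
    (∀ d : ℕ, 4 < d →
      Set.ncard {O : Set ℝ |
          ∃ y : ℝ, Gx1 y = Gx1 ((d : ℝ))⁻¹ ∧ O = {z | SameOrbit1 y z}}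
        = max 1 (Nat.totient d / 2) ∧
      ∀ p p' : ℕ, 0 < p → p < d → 0 < p' → p' < d →
        Nat.gcd p d = 1 → Nat.gcd p' d = 1 →
        (SameOrbit1 ((p : ℝ) / (d : ℝ)) ((p' : ℝ) / (d : ℝ)) ↔
          ((p' : ℤ) ≡ (p : ℤ) [ZMOD (d : ℤ)] ∨ (p' : ℤ) ≡ -(p : ℤ) [ZMOD (d : ℤ)]))) := by
  refine ⟨fun x hx y => ?_, fun q hq y => ?_, fun d hd => ⟨?_, fun p p' _ _ _ _ _ _ => ?_⟩⟩
  · rw [setOf_sameOrbit1_eq_iff]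
    exact ⟨SameOrbit1.Gx1_eq, hx.sameOrbit1_of_Gx1_eq⟩
  · rw [setOf_sameOrbit1_eq_iff]
    exact ⟨SameOrbit1.Gx1_eq, fun h =>
      sameOrbit1_of_Gx1_eq_Gx1_inv_of_le_four q.den_nz hq (Gx1_ratCast q) (h ▸ Gx1_ratCast q)⟩
  · obtain ⟨k, hk⟩ := Nat.totient_even (by omega : 2 < d)
    have htot := Nat.totient_pos.2 (by omega : 0 < d)
    rw [orbits_of_Gx1_inv_eq_range (by omega), ncard_range_orbitOfUnit (by omega),
      max_eq_right (by omega)]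
  · simpa using sameOrbit1_intCast_div_iff (a := p) (b := p') (by omega : d ≠ 0)
end
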